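/- A local flat epimorphism of commutative monoids is an isomorphism: if φ: M → N is an epimorphism of commutative monoids, is local (φ⁻¹(N^×) = M^×), and the functor (− ⊗_M N) from M-sets to N-sets preserves finite limits, then φ is bijective. -/

import Mathlib

section
open Relation
variable {M N : Type} [CommMonoid M] [CommMonoid N]

/-- The generating relation for the base change `T ⊗_M N` of an `M`-set `T` along
`φ : M →* N`: `(m • t, n) ∼ (t, φ(m) n)`. -/
inductive TensorRel (φ : M →* N) (T : Type) [MulAction M T] : T × N → T × N → Prop
  | mk (m : M) (t : T) (n : N) : TensorRel φ T (m • t, n) (t, φ m * n)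

/-- The base change `T ⊗_M N` of an `M`-set `T` along `φ : M →* N`:
the quotient of `T × N` by the equivalence relation generated by
`(m • t, n) ∼ (t, φ(m) n)`; it carries the `N`-action on the second factor. -/
abbrev MTensor (φ : M →* N) (T : Type) [MulAction M T] : Type :=
  Quotient (EqvGen.setoid (TensorRel φ T))

/-- The class of `(t, n)` in `T ⊗_M N`. -/
def MTensor.mk (φ : M →* N) {T : Type} [MulAction M T] (t : T) (n : N) :
    MTensor φ T :=
  Quotient.mk (EqvGen.setoid (TensorRel φ T)) (t, n)

/-- The map `T ⊗_M N → U ⊗_M N` induced by a map of `M`-sets `f : T → U`. -/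
def MTensor.map (φ : M →* N) {T U : Type} [MulAction M T] [MulAction M U]
    (f : T →[M] U) : MTensor φ T → MTensor φ U :=
  Quotient.lift (fun p => MTensor.mk φ (f p.1) p.2) (by
    intro a b h
    induction h with
    | rel x y hxy =>
      obtain ⟨m, t, n⟩ := hxy
      refine Quotient.sound ?_
      show EqvGen (TensorRel φ U) (f (m • t), n) (f t, φ m * n)
      rw [map_smul]
      exact EqvGen.rel _ _ (TensorRel.mk m (f t) n)
    | refl x => rfl
    | symm x y _ ih => exact ih.symm
    | trans x y z _ _ ih₁ ih₂ => exact ih₁.trans ih₂)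

/-- The comparison map `(T × U) ⊗_M N → (T ⊗_M N) × (U ⊗_M N)`. -/
def tensorProdCompare (φ : M →* N) (T U : Type) [MulAction M T] [MulAction M U] :
    MTensor φ (T × U) → MTensor φ T × MTensor φ U :=
  Quotient.lift (fun p => (MTensor.mk φ p.1.1 p.2, MTensor.mk φ p.1.2 p.2)) (by
    intro a b h
    induction h with
    | rel x y hxy =>
      obtain ⟨m, t, n⟩ := hxy
      exact Prod.ext (Quotient.sound (EqvGen.rel _ _ (TensorRel.mk m t.1 n)))
        (Quotient.sound (EqvGen.rel _ _ (TensorRel.mk m t.2 n)))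
    | refl x => rfl
    | symm x y _ ih => exact ih.symm
    | trans x y z _ _ ih₁ ih₂ => exact ih₁.trans ih₂)

/-- The equalizer of two maps of `M`-sets is an `M`-set. -/
instance tensorEqMulAction {T U : Type} [MulAction M T] [MulAction M U]
    (f g : T →[M] U) : MulAction M {t : T // f t = g t} where
  smul m t := ⟨m • t.1, by rw [map_smul, map_smul, t.2]⟩
  one_smul t := Subtype.ext (one_smul M t.1)
  mul_smul a b t := Subtype.ext (mul_smul a b t.1)

/-- The inclusion of the equalizer, as a map of `M`-sets. -/
def tensorEqIncl {T U : Type} [MulAction M T] [MulAction M U] (f g : T →[M] U) :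
    {t : T // f t = g t} →[M] T :=
  ⟨Subtype.val, fun _ _ => rfl⟩

/-- The comparison map from `E ⊗_M N` (`E` the equalizer of `f, g`) to the equalizer
of the induced maps `T ⊗_M N ⇉ U ⊗_M N`. -/
def tensorEqCompare (φ : M →* N) {T U : Type} [MulAction M T] [MulAction M U]
    (f g : T →[M] U) : MTensor φ {t : T // f t = g t} →
      {x : MTensor φ T // MTensor.map φ f x = MTensor.map φ g x} :=
  fun y => ⟨MTensor.map φ (tensorEqIncl f g) y, by
    induction y using Quotient.inductionOn with
    | h p =>
      show MTensor.mk φ (f p.1.1) p.2 = MTensor.mk φ (g p.1.1) p.2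
      rw [p.1.2]⟩

/-- `φ : M →* N` is flat: the base change functor `(− ⊗_M N)` from `M`-sets to `N`-sets
preserves finite limits, i.e. binary products, the terminal object and equalizers. -/
def MonFlat (φ : M →* N) : Prop :=
  (∀ (T U : Type) [MulAction M T] [MulAction M U],
      Function.Bijective (tensorProdCompare φ T U)) ∧
  (Nonempty (MTensor φ PUnit) ∧ Subsingleton (MTensor φ PUnit)) ∧
  (∀ (T U : Type) [MulAction M T] [MulAction M U] (f g : T →[M] U),
      Function.Bijective (tensorEqCompare φ f g))

end

/-- `φ` is an epimorphism in the category of commutative monoids: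
it is right-cancellable. -/
def MonEpi {M N : Type} [CommMonoid M] [CommMonoid N] (φ : M →* N) : Prop :=
  ∀ (P : Type) [CommMonoid P] (f g : N →* P), f.comp φ = g.comp φ → f = g

/-!
Base change along `φ` sends `M` to `N`, via `(m, n) ↦ φ(m) n`, and under this identification
flatness produces preimages under `φ`. For surjectivity, lift the pair `(n, 1)` along
`(M × M) ⊗_M N ≅ N × N`: this gives `a, b ∈ M` and `n' ∈ N` with `φ(a) n' = n` and `φ(b) n' = 1`;
locality makes `b` a unit, so `n = φ(a b⁻¹)`. For injectivity, if `φ(a) = φ(b)` then `1` lies in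
the equalizer of multiplication by `φ(a)` and by `φ(b)` on `N`, hence comes from some `(x, n')`
with `x a = x b` and `φ(x) n' = 1`; again `x` is a unit, and `a = b`.
-/

namespace MTensor

variable {M N : Type} [CommMonoid M] [CommMonoid N] (φ : M →* N)

def selfEquiv : MTensor φ M ≃ N where
  toFun := Quotient.lift (fun p => φ p.1 * p.2) fun _ _ hpq =>
    Setoid.eqvGen_le (s := Setoid.ker fun p : M × N => φ p.1 * p.2)
      (fun _ _ ⟨m, t, n⟩ => by simp [Setoid.ker_def, mul_assoc, mul_left_comm]) hpq
  invFun n := mk φ 1 n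
  left_inv := by
    rintro ⟨m, n⟩
    refine (Quotient.sound (Relation.EqvGen.rel _ _ ?_)).symm
    simpa using TensorRel.mk (φ := φ) m (1 : M) n
  right_inv n := by simp [mk]

lemma exists_eq_mk {T : Type} [MulAction M T] (x : MTensor φ T) : ∃ t n, x = mk φ t n :=
  Quotient.inductionOn x fun p => ⟨p.1, p.2, rfl⟩

lemma tensorProdCompare_mk {T U : Type} [MulAction M T] [MulAction M U] (t : T) (u : U) (n : N) :
    tensorProdCompare φ T U (mk φ (t, u) n) = (mk φ t n, mk φ u n) := rfl

@[simp]
lemma selfEquiv_mk (m : M) (n : N) : selfEquiv φ (mk φ m n) = φ m * n := rfl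

lemma mk_self_eq_mk_self_iff {a b : M} {n n' : N} :
    mk φ a n = mk φ b n' ↔ φ a * n = φ b * n' := by
  rw [← (selfEquiv φ).apply_eq_iff_eq, selfEquiv_mk, selfEquiv_mk]

end MTensor

section LocalFlat

variable {M N : Type} [CommMonoid M] [CommMonoid N] {φ : M →* N}

lemma exists_unit_map_inv_eq_of_map_mul_eq_one (hloc : ∀ m : M, IsUnit (φ m) → IsUnit m)
    {b : M} {n : N} (h : φ b * n = 1) : ∃ u : Mˣ, (u : M) = b ∧ φ ↑u⁻¹ = n := by
  obtain ⟨u, rfl⟩ := hloc b (IsUnit.of_mul_eq_one _ h)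
  exact ⟨u, rfl, left_inv_eq_right_inv (by rw [← map_mul, Units.inv_mul, map_one]) h⟩

def mulRightActionHom (a : M) : M →[M] M :=
  ⟨(· * a), fun m x => mul_assoc m x a⟩

lemma surjective_of_isLocal_of_surjective_tensorProdCompare
    (hloc : ∀ m : M, IsUnit (φ m) → IsUnit m)
    (hprod : Function.Surjective (tensorProdCompare φ M M)) : Function.Surjective φ := by
  intro n
  obtain ⟨x, hx⟩ := hprod (MTensor.mk φ 1 n, MTensor.mk φ 1 1)
  obtain ⟨⟨a, b⟩, n', rfl⟩ := MTensor.exists_eq_mk φ x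
  rw [MTensor.tensorProdCompare_mk, Prod.mk.injEq] at hx
  obtain ⟨ha, hb⟩ := hx
  rw [MTensor.mk_self_eq_mk_self_iff, map_one, one_mul] at ha hb
  obtain ⟨u, rfl, hu⟩ := exists_unit_map_inv_eq_of_map_mul_eq_one hloc hb
  exact ⟨a * ↑u⁻¹, by rw [map_mul, hu, ha]⟩

lemma injective_of_isLocal_of_surjective_tensorEqCompare
    (hloc : ∀ m : M, IsUnit (φ m) → IsUnit m)
    (heq : ∀ f g : M →[M] M, Function.Surjective (tensorEqCompare φ f g)) :
    Function.Injective φ := by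
  intro a b hab
  let f := mulRightActionHom a
  let g := mulRightActionHom b
  have hfg : MTensor.map φ f (MTensor.mk φ 1 1) = MTensor.map φ g (MTensor.mk φ 1 1) := by
    change MTensor.mk φ (1 * a) 1 = MTensor.mk φ (1 * b) 1
    rw [MTensor.mk_self_eq_mk_self_iff, one_mul, one_mul, hab]
  obtain ⟨y, hy⟩ := heq f g ⟨_, hfg⟩
  obtain ⟨⟨x, hx⟩, n, rfl⟩ := MTensor.exists_eq_mk φ y
  have hxn : MTensor.mk φ x n = MTensor.mk φ 1 1 := congrArg Subtype.val hy
  rw [MTensor.mk_self_eq_mk_self_iff, map_one, one_mul] at hxn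
  obtain ⟨u, rfl, -⟩ := exists_unit_map_inv_eq_of_map_mul_eq_one hloc hxn
  exact u.isUnit.mul_left_cancel hx

end LocalFlat

theorem local_flat_epi_bijective_general {M N : Type} [CommMonoid M] [CommMonoid N]
    (φ : M →* N) (hloc : ∀ m : M, IsUnit (φ m) → IsUnit m)
    (hflat : MonFlat φ) : Function.Bijective φ :=
  ⟨injective_of_isLocal_of_surjective_tensorEqCompare hloc fun f g => (hflat.2.2 M M f g).2,
    surjective_of_isLocal_of_surjective_tensorProdCompare hloc (hflat.1 M M).2⟩

/-- A local flat epimorphism of commutative monoids is an isomorphism (bijective). -/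
theorem local_flat_epi_bijective {M N : Type} [CommMonoid M] [CommMonoid N]
    (φ : M →* N) (hepi : MonEpi φ) (hloc : ∀ m : M, IsUnit (φ m) → IsUnit m)
    (hflat : MonFlat φ) : Function.Bijective φ :=
  local_flat_epi_bijective_general φ hloc hflat
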